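/- arXiv:1703.07865 — 6 statements merged into one kernel-verified Lean document; each statement's English description precedes it below -/
import Mathlib

section
/- Let n ≥ 2, let L be a real symmetric positive semidefinite n×n matrix with L𝟙ₙ = 0 whose kernel is exactly span(𝟙ₙ), let H = diag(a₁,…,aₙ) with aᵢ > 0, and let b ∈ ℝⁿ, d ∈ ℝ. Assume there exists ε ∈ [0,1) such that for every y ∈ ℝⁿ with 𝟙ₙᵀy = 0 one has −ε yᵀy ≤ yᵀ(Iₙ − LHL)y ≤ ε yᵀy. Let x⋆ be the unique minimizer of f(x) = ½ xᵀHx + bᵀx over {x ∈ ℝⁿ : 𝟙ₙᵀx = d}. Fix q ∈ ℕ and let Φ_q(x) = x − L ∑_{p=0}^{q} (Iₙ − LHL)^p (Lb + LHx). Then for every x⁰ with 𝟙ₙᵀx⁰ = d, the iterates xᵏ = Φ_qᵏ(x⁰) converge to x⋆ exponentially: there exist C ≥ 0 and r ∈ (0,1), independent of x⁰ and k, such that ‖xᵏ − x⋆‖ ≤ C rᵏ ‖x⁰ − x⋆‖ for all k ∈ ℕ. -/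
open Matrix Finset

/-!
Write `M = 1 - L H L` and `𝟙ᗮ = {y | 𝟙 ⬝ᵥ y = 0}`. First-order optimality makes `H x⋆ + b`
orthogonal to `𝟙ᗮ ∋ L (H x⋆ + b)`, so `L (H x⋆ + b) = 0` because `L` is positive semidefinite,
i.e. `x⋆` is a fixed point of `Φ_q`. The geometric sum `L H L ∑_{p ≤ q} M ^ p = 1 - M ^ (q + 1)`
then shows that the error `e = x - x⋆` evolves by `L H e ↦ M ^ (q + 1) (L H e)`. Errors and
their images under `L H` stay in `𝟙ᗮ`, where the symmetric `M` has quadratic form bounded by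
some `ε₀ < 1` and is therefore an `ε₀`-contraction. Finally `L H` is bounded below on `𝟙ᗮ`:
`L H e = L v` for the component `v` of `H e` in `𝟙ᗮ`, and `‖v‖ ≥ min aᵢ ‖e‖` while
`‖L v‖² ≥ (1 - ε₀) / max aᵢ ‖v‖²`.
-/

section DotProduct

variable {ι : Type*} [Fintype ι]

lemma dotProduct_self_eq_sum_sq (v : ι → ℝ) : v ⬝ᵥ v = ∑ i, v i ^ 2 := by
  simp only [dotProduct, sq]

lemma dotProduct_self_nonneg (v : ι → ℝ) : 0 ≤ v ⬝ᵥ v :=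
  dotProduct_self_star_nonneg v

lemma dotProduct_sq_le_dotProduct_self_mul (v w : ι → ℝ) :
    (v ⬝ᵥ w) ^ 2 ≤ (v ⬝ᵥ v) * (w ⬝ᵥ w) := by
  rw [dotProduct_self_eq_sum_sq, dotProduct_self_eq_sum_sq]
  exact sum_mul_sq_le_sq_mul_sq univ v w

lemma mulVec_dotProduct_mulVec_self_le (A : Matrix ι ι ℝ) (v : ι → ℝ) :
    (A *ᵥ v) ⬝ᵥ (A *ᵥ v) ≤ (∑ i, ∑ j, A i j ^ 2) * (v ⬝ᵥ v) := by
  rw [dotProduct_self_eq_sum_sq, sum_mul]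
  refine sum_le_sum fun i _ => ?_
  rw [← dotProduct_self_eq_sum_sq]
  exact dotProduct_sq_le_dotProduct_self_mul (A i) v

lemma norm_sq_le_dotProduct_self (v : ι → ℝ) : ‖v‖ ^ 2 ≤ v ⬝ᵥ v := by
  rw [← Real.sqrt_le_sqrt_iff (dotProduct_self_nonneg v), Real.sqrt_sq (norm_nonneg v)]
  refine (pi_norm_le_iff_of_nonneg (Real.sqrt_nonneg _)).2 fun i => ?_
  rw [Real.norm_eq_abs, ← Real.sqrt_sq_eq_abs, dotProduct_self_eq_sum_sq]
  exact Real.sqrt_le_sqrt (single_le_sum (fun j _ => sq_nonneg (v j)) (mem_univ i))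

lemma dotProduct_self_le_card_mul_norm_sq (v : ι → ℝ) :
    v ⬝ᵥ v ≤ Fintype.card ι * ‖v‖ ^ 2 := by
  rw [dotProduct_self_eq_sum_sq, ← nsmul_eq_mul, ← card_univ, ← sum_const]
  refine sum_le_sum fun i _ => ?_
  rw [← sq_abs, ← Real.norm_eq_abs]
  exact pow_le_pow_left₀ (norm_nonneg _) (norm_le_pi_norm v i) 2

lemma dotProduct_mulVec_comm {A : Matrix ι ι ℝ} (hA : A.IsSymm) (x y : ι → ℝ) :
    x ⬝ᵥ (A *ᵥ y) = y ⬝ᵥ (A *ᵥ x) := by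
  rw [dotProduct_mulVec, ← mulVec_transpose, hA.eq, dotProduct_comm]

lemma norm_le_sqrt_mul_of_mul_dotProduct_self_le {v w : ι → ℝ} {κ K ρ : ℝ} (hκ : 0 < κ)
    (hK : 0 ≤ K) (hρ : 0 ≤ ρ)
    (h : κ * (v ⬝ᵥ v) ≤ ρ ^ 2 * (K * (w ⬝ᵥ w))) :
    ‖v‖ ≤ √(K * Fintype.card ι / κ) * ρ * ‖w‖ := by
  refine (pow_le_pow_iff_left₀ (norm_nonneg v) (by positivity) two_ne_zero).1 ?_
  rw [mul_pow, mul_pow, Real.sq_sqrt (by positivity), div_mul_eq_mul_div, div_mul_eq_mul_div,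
    le_div_iff₀ hκ]
  calc ‖v‖ ^ 2 * κ ≤ κ * (v ⬝ᵥ v) := by
        rw [mul_comm]; exact mul_le_mul_of_nonneg_left (norm_sq_le_dotProduct_self v) hκ.le
    _ ≤ ρ ^ 2 * (K * (w ⬝ᵥ w)) := h
    _ ≤ ρ ^ 2 * (K * (Fintype.card ι * ‖w‖ ^ 2)) := by
        gcongr; exact dotProduct_self_le_card_mul_norm_sq w
    _ = K * Fintype.card ι * ρ ^ 2 * ‖w‖ ^ 2 := by ring

end DotProduct

section Minimizer

variable {ι : Type*} [Fintype ι]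

noncomputable def quadraticObjective (H : Matrix ι ι ℝ) (b x : ι → ℝ) : ℝ :=
  1 / 2 * (x ⬝ᵥ (H *ᵥ x)) + b ⬝ᵥ x

lemma quadraticObjective_add_smul {H : Matrix ι ι ℝ} (hH : H.IsSymm) (b x y : ι → ℝ)
    (t : ℝ) : quadraticObjective H b (x + t • y) = quadraticObjective H b x +
      t * (y ⬝ᵥ (H *ᵥ x + b)) + t ^ 2 * (1 / 2 * (y ⬝ᵥ (H *ᵥ y))) := by
  simp only [quadraticObjective, mulVec_add, mulVec_smul, dotProduct_add, add_dotProduct,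
    dotProduct_smul, smul_dotProduct, smul_eq_mul]
  rw [dotProduct_mulVec_comm hH x y, dotProduct_comm b y]
  ring

lemma dotProduct_gradient_eq_zero_of_isMin {H : Matrix ι ι ℝ} (hH : H.IsSymm)
    {b u xstar y : ι → ℝ} {d : ℝ} (hfeas : u ⬝ᵥ xstar = d)
    (hmin : ∀ x, u ⬝ᵥ x = d → quadraticObjective H b xstar ≤ quadraticObjective H b x)
    (hy : u ⬝ᵥ y = 0) : y ⬝ᵥ (H *ᵥ xstar + b) = 0 := by
  set g := fun t : ℝ => quadraticObjective H b (xstar + t • y)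
  have hloc : IsLocalMin g 0 := Filter.Eventually.of_forall fun t => by
    simpa [g] using
      hmin _ (by rw [dotProduct_add, dotProduct_smul, hy, hfeas, smul_zero, add_zero])
  refine hloc.hasDerivAt_eq_zero ?_
  simp only [g, quadraticObjective_add_smul hH]
  exact ((((hasDerivAt_id (0 : ℝ)).mul_const _).const_add _).add
    ((hasDerivAt_pow 2 (0 : ℝ)).mul_const _)).congr_deriv (by simp)

end Minimizer

section Laplacian

variable {ι : Type*} [Fintype ι] {L : Matrix ι ι ℝ} {u : ι → ℝ}

lemma dotProduct_mulVec_eq_zero_of_mulVec_eq_zero (hL : L.IsSymm) (hLu : L *ᵥ u = 0)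
    (w : ι → ℝ) : u ⬝ᵥ (L *ᵥ w) = 0 := by
  rw [dotProduct_mulVec_comm hL, hLu, dotProduct_zero]

lemma mulVec_eq_zero_of_forall_dotProduct_eq_zero (hL : L.IsSymm) (hLpsd : L.PosSemidef)
    (hLu : L *ᵥ u = 0) {w : ι → ℝ} (hw : ∀ y, u ⬝ᵥ y = 0 → y ⬝ᵥ w = 0) :
    L *ᵥ w = 0 := by
  refine (hLpsd.dotProduct_mulVec_zero_iff w).1 ?_
  rw [star_trivial, dotProduct_comm]
  exact hw _ (dotProduct_mulVec_eq_zero_of_mulVec_eq_zero hL hLu w)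

lemma exists_dotProduct_sub_smul_eq_zero (u w : ι → ℝ) :
    ∃ s : ℝ, u ⬝ᵥ (w - s • u) = 0 := by
  by_cases hc : u ⬝ᵥ u = 0
  · exact ⟨0, by simp [dotProduct_self_eq_zero.1 hc]⟩
  · exact ⟨u ⬝ᵥ w / (u ⬝ᵥ u), by
      rw [dotProduct_sub, dotProduct_smul, smul_eq_mul, div_mul_cancel₀ _ hc, sub_self]⟩

lemma dotProduct_one_sub_mul_mul_mulVec_eq_zero [DecidableEq ι] (H : Matrix ι ι ℝ)
    (hL : L.IsSymm) (hLu : L *ᵥ u = 0) {y : ι → ℝ} (hy : u ⬝ᵥ y = 0) :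
    u ⬝ᵥ ((1 - L * H * L) *ᵥ y) = 0 := by
  rw [sub_mulVec, one_mulVec, dotProduct_sub, hy, mul_assoc, ← mulVec_mulVec,
    dotProduct_mulVec_eq_zero_of_mulVec_eq_zero hL hLu, sub_zero]

lemma isSymm_one_sub_mul_mul [DecidableEq ι] {H : Matrix ι ι ℝ} (hL : L.IsSymm)
    (hH : H.IsSymm) : (1 - L * H * L).IsSymm :=
  isSymm_one.sub <| by rw [IsSymm, transpose_mul, transpose_mul, hL.eq, hH.eq, mul_assoc]

lemma mulVec_add_mulVec_eq_zero_of_isMin {H : Matrix ι ι ℝ} (hL : L.IsSymm)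
    (hLpsd : L.PosSemidef) (hLu : L *ᵥ u = 0) (hH : H.IsSymm) {b xstar : ι → ℝ} {d : ℝ}
    (hfeas : u ⬝ᵥ xstar = d)
    (hmin : ∀ x, u ⬝ᵥ x = d → quadraticObjective H b xstar ≤ quadraticObjective H b x) :
    L *ᵥ b + (L * H) *ᵥ xstar = 0 := by
  rw [← mulVec_mulVec, ← mulVec_add, add_comm]
  exact mulVec_eq_zero_of_forall_dotProduct_eq_zero hL hLpsd hLu fun y hy =>
    dotProduct_gradient_eq_zero_of_isMin hH hfeas hmin hy

end Laplacian

section Contraction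

variable {ι : Type*} [Fintype ι] {M : Matrix ι ι ℝ} {u : ι → ℝ} {c : ℝ}

lemma two_mul_dotProduct_mulVec_le (hM : M.IsSymm)
    (hbound : ∀ y, u ⬝ᵥ y = 0 → |y ⬝ᵥ (M *ᵥ y)| ≤ c * (y ⬝ᵥ y))
    {x y : ι → ℝ} (hx : u ⬝ᵥ x = 0) (hy : u ⬝ᵥ y = 0) :
    2 * (x ⬝ᵥ (M *ᵥ y)) ≤ c * (x ⬝ᵥ x + y ⬝ᵥ y) := by
  have hplus := (abs_le.1 (hbound (x + y) (by rw [dotProduct_add, hx, hy, add_zero]))).2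
  have hminus := (abs_le.1 (hbound (x - y) (by rw [dotProduct_sub, hx, hy, sub_zero]))).1
  simp only [mulVec_add, mulVec_sub, dotProduct_add, dotProduct_sub, add_dotProduct,
    sub_dotProduct] at hplus hminus
  rw [dotProduct_mulVec_comm hM y x, dotProduct_comm y x] at hplus hminus
  linarith

lemma dotProduct_mulVec_self_le (hM : M.IsSymm) (hc : 0 < c)
    (hMu : ∀ y, u ⬝ᵥ y = 0 → u ⬝ᵥ (M *ᵥ y) = 0)
    (hbound : ∀ y, u ⬝ᵥ y = 0 → |y ⬝ᵥ (M *ᵥ y)| ≤ c * (y ⬝ᵥ y))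
    {y : ι → ℝ} (hy : u ⬝ᵥ y = 0) : (M *ᵥ y) ⬝ᵥ (M *ᵥ y) ≤ c ^ 2 * (y ⬝ᵥ y) := by
  -- polarization, tested against `x = c⁻¹ • M y`
  have h := two_mul_dotProduct_mulVec_le hM hbound (x := c⁻¹ • M *ᵥ y)
    (by rw [dotProduct_smul, hMu y hy, smul_zero]) hy
  simp only [smul_dotProduct, dotProduct_smul, smul_eq_mul] at h
  rw [mul_add, mul_inv_cancel_left₀ hc.ne'] at h
  rw [sq, mul_assoc, ← inv_mul_le_iff₀ hc]
  linarith

lemma dotProduct_pow_mulVec_self_le [DecidableEq ι] (hM : M.IsSymm) (hc : 0 < c)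
    (hMu : ∀ y, u ⬝ᵥ y = 0 → u ⬝ᵥ (M *ᵥ y) = 0)
    (hbound : ∀ y, u ⬝ᵥ y = 0 → |y ⬝ᵥ (M *ᵥ y)| ≤ c * (y ⬝ᵥ y))
    (k : ℕ) {y : ι → ℝ} (hy : u ⬝ᵥ y = 0) :
    (M ^ k *ᵥ y) ⬝ᵥ (M ^ k *ᵥ y) ≤ (c ^ 2) ^ k * (y ⬝ᵥ y) := by
  induction k generalizing y with
  | zero => simp
  | succ k ih =>
    rw [pow_succ, ← mulVec_mulVec, pow_succ, mul_assoc]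
    exact (ih (hMu y hy)).trans <| mul_le_mul_of_nonneg_left
      (dotProduct_mulVec_self_le hM hc hMu hbound hy) (by positivity)

end Contraction

section Coercivity

variable {ι : Type*} [Fintype ι] {L H : Matrix ι ι ℝ} {u : ι → ℝ} {m Mx c : ℝ}

lemma exists_pos_forall_le_and_le {a : ι → ℝ} (ha : ∀ i, 0 < a i) :
    ∃ m Mx : ℝ, 0 < m ∧ 0 < Mx ∧ ∀ i, m ≤ a i ∧ a i ≤ Mx := by
  cases isEmpty_or_nonempty ι
  · exact ⟨1, 1, one_pos, one_pos, isEmptyElim⟩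
  · obtain ⟨i₀, h₀⟩ := Finite.exists_min a
    obtain ⟨i₁, h₁⟩ := Finite.exists_max a
    exact ⟨a i₀, a i₁, ha i₀, ha i₁, fun i => ⟨h₀ i, h₁ i⟩⟩

lemma sq_mul_dotProduct_self_le (hm0 : 0 ≤ m) (hm : ∀ v, m * (v ⬝ᵥ v) ≤ v ⬝ᵥ (H *ᵥ v))
    {e : ι → ℝ} (he : u ⬝ᵥ e = 0) (s : ℝ) :
    m ^ 2 * (e ⬝ᵥ e) ≤ (H *ᵥ e - s • u) ⬝ᵥ (H *ᵥ e - s • u) := by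
  set v := H *ᵥ e - s • u
  have hev : m * (e ⬝ᵥ e) ≤ e ⬝ᵥ v := by
    rw [dotProduct_sub, dotProduct_smul, dotProduct_comm e u, he, smul_zero, sub_zero]
    exact hm e
  have hcs := dotProduct_sq_le_dotProduct_self_mul e v
  have hmee : 0 ≤ m * (e ⬝ᵥ e) := mul_nonneg hm0 (dotProduct_self_nonneg e)
  rcases (dotProduct_self_nonneg e).eq_or_lt with he0 | he0
  · rw [← he0, mul_zero]
    exact dotProduct_self_nonneg v
  · refine le_of_mul_le_mul_left ?_ he0
    nlinarith [pow_le_pow_left₀ hmee hev 2]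

variable [DecidableEq ι]

lemma dotProduct_diagonal_mulVec (a v : ι → ℝ) :
    v ⬝ᵥ (diagonal a *ᵥ v) = ∑ i, a i * v i ^ 2 := by
  simp only [dotProduct, mulVec_diagonal]
  exact sum_congr rfl fun i _ => by ring

lemma mul_dotProduct_self_le_dotProduct_diagonal_mulVec {a : ι → ℝ} (h : ∀ i, m ≤ a i)
    (v : ι → ℝ) : m * (v ⬝ᵥ v) ≤ v ⬝ᵥ (diagonal a *ᵥ v) := by
  rw [dotProduct_diagonal_mulVec, dotProduct_self_eq_sum_sq, mul_sum]
  exact sum_le_sum fun i _ => mul_le_mul_of_nonneg_right (h i) (sq_nonneg _)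

lemma dotProduct_diagonal_mulVec_le_mul_dotProduct_self {a : ι → ℝ} (h : ∀ i, a i ≤ Mx)
    (v : ι → ℝ) : v ⬝ᵥ (diagonal a *ᵥ v) ≤ Mx * (v ⬝ᵥ v) := by
  rw [dotProduct_diagonal_mulVec, dotProduct_self_eq_sum_sq, mul_sum]
  exact sum_le_sum fun i _ => mul_le_mul_of_nonneg_right (h i) (sq_nonneg _)

lemma sub_mul_dotProduct_self_le (hL : L.IsSymm)
    (hMx : ∀ v, v ⬝ᵥ (H *ᵥ v) ≤ Mx * (v ⬝ᵥ v))
    (hc : ∀ v, u ⬝ᵥ v = 0 → v ⬝ᵥ ((1 - L * H * L) *ᵥ v) ≤ c * (v ⬝ᵥ v))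
    {v : ι → ℝ} (hv : u ⬝ᵥ v = 0) : (1 - c) * (v ⬝ᵥ v) ≤ Mx * ((L *ᵥ v) ⬝ᵥ (L *ᵥ v)) := by
  have h := hc v hv
  rw [sub_mulVec, one_mulVec, dotProduct_sub, ← mulVec_mulVec, ← mulVec_mulVec,
    dotProduct_mulVec_comm hL, dotProduct_comm (H *ᵥ _)] at h
  linarith [hMx (L *ᵥ v)]

lemma div_mul_dotProduct_self_le (hL : L.IsSymm) (hLu : L *ᵥ u = 0) (hm0 : 0 ≤ m)
    (hm : ∀ v, m * (v ⬝ᵥ v) ≤ v ⬝ᵥ (H *ᵥ v)) (hMx0 : 0 < Mx)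
    (hMx : ∀ v, v ⬝ᵥ (H *ᵥ v) ≤ Mx * (v ⬝ᵥ v)) (hc1 : c ≤ 1)
    (hc : ∀ v, u ⬝ᵥ v = 0 → v ⬝ᵥ ((1 - L * H * L) *ᵥ v) ≤ c * (v ⬝ᵥ v))
    {e : ι → ℝ} (he : u ⬝ᵥ e = 0) :
    m ^ 2 * (1 - c) / Mx * (e ⬝ᵥ e) ≤ ((L * H) *ᵥ e) ⬝ᵥ ((L * H) *ᵥ e) := by
  obtain ⟨s, hs⟩ := exists_dotProduct_sub_smul_eq_zero u (H *ᵥ e)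
  have hLv : L *ᵥ (H *ᵥ e - s • u) = (L * H) *ᵥ e := by
    rw [mulVec_sub, mulVec_smul, hLu, smul_zero, sub_zero, mulVec_mulVec]
  have hlow := mul_le_mul_of_nonneg_left (sq_mul_dotProduct_self_le hm0 hm he s)
    (sub_nonneg.2 hc1)
  have hup := sub_mul_dotProduct_self_le hL hMx hc hs
  rw [hLv] at hup
  rw [div_mul_eq_mul_div, div_le_iff₀ hMx0]
  linarith

end Coercivity

section Dana

variable {ι : Type*} [Fintype ι] [DecidableEq ι] {L H : Matrix ι ι ℝ} {b xstar : ι → ℝ}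
  {q : ℕ}

noncomputable def danaMap (L H : Matrix ι ι ℝ) (b : ι → ℝ) (q : ℕ) (x : ι → ℝ) : ι → ℝ :=
  x - L *ᵥ ((∑ p ∈ range (q + 1), (1 - L * H * L) ^ p) *ᵥ (L *ᵥ b + (L * H) *ᵥ x))

lemma dotProduct_danaMap_iterate {u : ι → ℝ} (hL : L.IsSymm) (hLu : L *ᵥ u = 0) (k : ℕ)
    (x : ι → ℝ) : u ⬝ᵥ (danaMap L H b q)^[k] x = u ⬝ᵥ x := by
  induction k with
  | zero => rfl
  | succ k ih =>
    rw [Function.iterate_succ_apply', danaMap, dotProduct_sub,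
      dotProduct_mulVec_eq_zero_of_mulVec_eq_zero hL hLu, sub_zero, ih]

lemma mulVec_danaMap_sub (hfix : L *ᵥ b + (L * H) *ᵥ xstar = 0) (x : ι → ℝ) :
    (L * H) *ᵥ (danaMap L H b q x - xstar) =
      (1 - L * H * L) ^ (q + 1) *ᵥ ((L * H) *ᵥ (x - xstar)) := by
  have hgrad : L *ᵥ b + (L * H) *ᵥ x = (L * H) *ᵥ (x - xstar) := by
    rw [mulVec_sub, eq_sub_iff_add_eq, add_right_comm, hfix, zero_add]
  have hgeom : L * H * L * ∑ p ∈ range (q + 1), (1 - L * H * L) ^ p =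
      1 - (1 - L * H * L) ^ (q + 1) := by
    simpa using mul_neg_geom_sum (1 - L * H * L) (q + 1)
  rw [danaMap, hgrad, sub_right_comm, mulVec_sub, mulVec_mulVec, mulVec_mulVec, hgeom,
    sub_mulVec, one_mulVec, sub_sub_cancel]

lemma mulVec_danaMap_iterate_sub (hfix : L *ᵥ b + (L * H) *ᵥ xstar = 0) (k : ℕ)
    (x : ι → ℝ) :
    (L * H) *ᵥ ((danaMap L H b q)^[k] x - xstar) =
      (1 - L * H * L) ^ ((q + 1) * k) *ᵥ ((L * H) *ᵥ (x - xstar)) := by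
  induction k with
  | zero => simp
  | succ k ih =>
    rw [Function.iterate_succ_apply', mulVec_danaMap_sub hfix, ih, mulVec_mulVec, ← pow_add,
      mul_add_one, add_comm]

theorem exists_norm_danaMap_iterate_sub_le {u : ι → ℝ} {m Mx c : ℝ} (hL : L.IsSymm)
    (hLu : L *ᵥ u = 0) (hH : H.IsSymm) (hm : 0 < m)
    (hHlow : ∀ v, m * (v ⬝ᵥ v) ≤ v ⬝ᵥ (H *ᵥ v)) (hMx : 0 < Mx)
    (hHup : ∀ v, v ⬝ᵥ (H *ᵥ v) ≤ Mx * (v ⬝ᵥ v)) (hc : 0 < c) (hc1 : c < 1)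
    (hbound : ∀ y, u ⬝ᵥ y = 0 → |y ⬝ᵥ ((1 - L * H * L) *ᵥ y)| ≤ c * (y ⬝ᵥ y))
    (hfix : L *ᵥ b + (L * H) *ᵥ xstar = 0) :
    ∃ C : ℝ, 0 ≤ C ∧ ∀ x : ι → ℝ, u ⬝ᵥ x = u ⬝ᵥ xstar → ∀ k : ℕ,
      ‖(danaMap L H b q)^[k] x - xstar‖ ≤ C * (c ^ (q + 1)) ^ k * ‖x - xstar‖ := by
  set K := ∑ i, ∑ j, (L * H) i j ^ 2
  set κ := m ^ 2 * (1 - c) / Mx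
  refine ⟨√(K * Fintype.card ι / κ), Real.sqrt_nonneg _, fun x hx k => ?_⟩
  set e := (danaMap L H b q)^[k] x - xstar
  have he : u ⬝ᵥ e = 0 := by
    rw [dotProduct_sub, dotProduct_danaMap_iterate hL hLu, hx, sub_self]
  have hw : u ⬝ᵥ ((L * H) *ᵥ (x - xstar)) = 0 := by
    rw [← mulVec_mulVec]
    exact dotProduct_mulVec_eq_zero_of_mulVec_eq_zero hL hLu _
  set w := (L * H) *ᵥ (x - xstar)
  refine norm_le_sqrt_mul_of_mul_dotProduct_self_le (by have := sub_pos.2 hc1; positivity)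
    (by positivity) (by positivity) ?_
  calc κ * (e ⬝ᵥ e) ≤ ((L * H) *ᵥ e) ⬝ᵥ ((L * H) *ᵥ e) :=
        div_mul_dotProduct_self_le hL hLu hm.le hHlow hMx hHup hc1.le
          (fun v hv => (hbound v hv).trans' (le_abs_self _)) he
    _ = ((1 - L * H * L) ^ ((q + 1) * k) *ᵥ w) ⬝ᵥ ((1 - L * H * L) ^ ((q + 1) * k) *ᵥ w) := by
        rw [mulVec_danaMap_iterate_sub hfix]
    _ ≤ (c ^ 2) ^ ((q + 1) * k) * (w ⬝ᵥ w) :=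
        dotProduct_pow_mulVec_self_le (isSymm_one_sub_mul_mul hL hH) hc
          (fun y => dotProduct_one_sub_mul_mul_mulVec_eq_zero H hL hLu) hbound _ hw
    _ ≤ ((c ^ (q + 1)) ^ k) ^ 2 * (K * ((x - xstar) ⬝ᵥ (x - xstar))) := by
        rw [← pow_mul, ← pow_mul, ← pow_mul, mul_comm 2, mul_assoc]
        exact mul_le_mul_of_nonneg_left (mulVec_dotProduct_mulVec_self_le _ (x - xstar))
          (pow_nonneg hc.le _)

end Dana

theorem dana_exponential_convergence_general
    (n : ℕ)
    (L H : Matrix (Fin n) (Fin n) ℝ)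
    (a : Fin n → ℝ) (ha : ∀ i, 0 < a i) (hH : H = Matrix.diagonal a)
    (hLsym : L.IsSymm) (hLpsd : L.PosSemidef)
    (hL1 : L *ᵥ (fun _ => (1 : ℝ)) = 0)
    (b : Fin n → ℝ) (d : ℝ)
    (ε : ℝ) (hε1 : ε < 1)
    (heig : ∀ y : Fin n → ℝ, (fun _ => (1 : ℝ)) ⬝ᵥ y = 0 →
      -(ε * (y ⬝ᵥ y)) ≤ y ⬝ᵥ ((1 - L * H * L) *ᵥ y) ∧
      y ⬝ᵥ ((1 - L * H * L) *ᵥ y) ≤ ε * (y ⬝ᵥ y))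
    (xstar : Fin n → ℝ)
    (hfeas : (fun _ => (1 : ℝ)) ⬝ᵥ xstar = d)
    (hmin : ∀ x : Fin n → ℝ, (fun _ => (1 : ℝ)) ⬝ᵥ x = d →
      (1 / 2) * (xstar ⬝ᵥ (H *ᵥ xstar)) + b ⬝ᵥ xstar ≤
      (1 / 2) * (x ⬝ᵥ (H *ᵥ x)) + b ⬝ᵥ x)
    (q : ℕ)
    (Φ : (Fin n → ℝ) → (Fin n → ℝ))
    (hΦ : ∀ x, Φ x = x - L *ᵥ
      ((∑ p ∈ Finset.range (q + 1), (1 - L * H * L) ^ p) *ᵥ (L *ᵥ b + (L * H) *ᵥ x))) :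
    ∃ C : ℝ, 0 ≤ C ∧ ∃ r : ℝ, 0 < r ∧ r < 1 ∧
      ∀ x0 : Fin n → ℝ, (fun _ => (1 : ℝ)) ⬝ᵥ x0 = d →
        ∀ k : ℕ, ‖Φ^[k] x0 - xstar‖ ≤ C * r ^ k * ‖x0 - xstar‖ := by
  obtain rfl : Φ = danaMap L H b q := funext hΦ
  obtain ⟨m, Mx, hm, hMx, hma⟩ := exists_pos_forall_le_and_le ha
  have hHsym : H.IsSymm := hH ▸ isSymm_diagonal a
  have hfix := mulVec_add_mulVec_eq_zero_of_isMin hLsym hLpsd hL1 hHsym hfeas hmin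
  -- a positive contraction constant, also when `ε ≤ 0`
  set ε₀ := max ε (1 / 2)
  have hε₀ : 0 < ε₀ := lt_max_of_lt_right one_half_pos
  have hε₀1 : ε₀ < 1 := max_lt hε1 one_half_lt_one
  have hbound (y) (hy : (fun _ => (1 : ℝ)) ⬝ᵥ y = 0) :
      |y ⬝ᵥ ((1 - L * H * L) *ᵥ y)| ≤ ε₀ * (y ⬝ᵥ y) :=
    (abs_le.2 (heig y hy)).trans <|
      mul_le_mul_of_nonneg_right (le_max_left _ _) (dotProduct_self_nonneg y)
  obtain ⟨C, hC, hconv⟩ := exists_norm_danaMap_iterate_sub_le (q := q) hLsym hL1 hHsym hm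
    (hH ▸ mul_dotProduct_self_le_dotProduct_diagonal_mulVec fun i => (hma i).1) hMx
    (hH ▸ dotProduct_diagonal_mulVec_le_mul_dotProduct_self fun i => (hma i).2) hε₀ hε₀1 hbound hfix
  exact ⟨C, hC, ε₀ ^ (q + 1), pow_pos hε₀ _, pow_lt_one₀ hε₀.le hε₀1 q.succ_ne_zero,
    fun x0 hx0 => hconv x0 (hx0.trans hfeas.symm)⟩

/-- Exponential convergence of the DANA iterates to the unique
constrained minimizer. -/
theorem dana_exponential_convergence
    (n : ℕ) (hn : 2 ≤ n)
    (L H : Matrix (Fin n) (Fin n) ℝ)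
    (a : Fin n → ℝ) (ha : ∀ i, 0 < a i) (hH : H = Matrix.diagonal a)
    (hLsym : L.IsSymm) (hLpsd : L.PosSemidef)
    (hL1 : L *ᵥ (fun _ => (1 : ℝ)) = 0)
    (hker : ∀ x : Fin n → ℝ, L *ᵥ x = 0 ↔ ∃ c : ℝ, x = c • (fun _ => (1 : ℝ)))
    (b : Fin n → ℝ) (d : ℝ)
    (ε : ℝ) (hε0 : 0 ≤ ε) (hε1 : ε < 1)
    (heig : ∀ y : Fin n → ℝ, (fun _ => (1 : ℝ)) ⬝ᵥ y = 0 →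
      -(ε * (y ⬝ᵥ y)) ≤ y ⬝ᵥ ((1 - L * H * L) *ᵥ y) ∧
      y ⬝ᵥ ((1 - L * H * L) *ᵥ y) ≤ ε * (y ⬝ᵥ y))
    (xstar : Fin n → ℝ)
    (hfeas : (fun _ => (1 : ℝ)) ⬝ᵥ xstar = d)
    (hmin : ∀ x : Fin n → ℝ, (fun _ => (1 : ℝ)) ⬝ᵥ x = d →
      (1 / 2) * (xstar ⬝ᵥ (H *ᵥ xstar)) + b ⬝ᵥ xstar ≤
      (1 / 2) * (x ⬝ᵥ (H *ᵥ x)) + b ⬝ᵥ x)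
    (huniq : ∀ y : Fin n → ℝ, (fun _ => (1 : ℝ)) ⬝ᵥ y = d →
      (∀ x : Fin n → ℝ, (fun _ => (1 : ℝ)) ⬝ᵥ x = d →
        (1 / 2) * (y ⬝ᵥ (H *ᵥ y)) + b ⬝ᵥ y ≤ (1 / 2) * (x ⬝ᵥ (H *ᵥ x)) + b ⬝ᵥ x) →
      y = xstar)
    (q : ℕ)
    (Φ : (Fin n → ℝ) → (Fin n → ℝ))
    (hΦ : ∀ x, Φ x = x - L *ᵥ
      ((∑ p ∈ Finset.range (q + 1), (1 - L * H * L) ^ p) *ᵥ (L *ᵥ b + (L * H) *ᵥ x))) :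
    ∃ C : ℝ, 0 ≤ C ∧ ∃ r : ℝ, 0 < r ∧ r < 1 ∧
      ∀ x0 : Fin n → ℝ, (fun _ => (1 : ℝ)) ⬝ᵥ x0 = d →
        ∀ k : ℕ, ‖Φ^[k] x0 - xstar‖ ≤ C * r ^ k * ‖x0 - xstar‖ :=
  dana_exponential_convergence_general n L H a ha hH hLsym hLpsd hL1 b d ε hε1 heig xstar hfeas hmin
    q Φ hΦ
end

section
/- Let n ≥ 2, let L be a real symmetric positive semidefinite n×n matrix with L𝟙ₙ = 0 whose kernel is exactly span(𝟙ₙ), and let H = diag(a₁,…,aₙ) with aᵢ > 0. Let T be any real orthogonal n×n matrix whose last column is 𝟙ₙ/√n and let J = [I_{n−1} 0_{n−1}] ∈ ℝ^{(n−1)×n}. Then the matrix M = J Tᵀ L H L T Jᵀ is symmetric positive definite. -/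
open Matrix

/-!
Since `L` is symmetric, `M = Bᵀ H B` with `B = L T Jᵀ`, and `H` is positive definite, so it
suffices that `B` is injective. If `L (T Jᵀ x) = 0` then `T Jᵀ x = c 𝟙`, so
`Jᵀ x = c Tᵀ 𝟙` by orthogonality. The last coordinate of `Jᵀ x` vanishes while that of `Tᵀ 𝟙`
is `√n`, hence `c = 0`, and `Jᵀ x = 0` forces `x = 0`.
-/

namespace Matrix

/-- The matrix `J = [I 0]`. -/
def finPrefix (R : Type*) [Zero R] [One R] (m n : ℕ) : Matrix (Fin m) (Fin n) R :=
  of fun i j => if (i : ℕ) = j then 1 else 0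

variable {R : Type*} [CommRing R]

theorem finPrefix_transpose_mulVec_apply {m n : ℕ} (x : Fin m → R) (j : Fin n) :
    ((finPrefix R m n)ᵀ *ᵥ x) j = if h : (j : ℕ) < m then x ⟨j, h⟩ else 0 := by
  simp only [mulVec, dotProduct, transpose_apply, finPrefix, of_apply, ite_mul, one_mul,
    zero_mul]
  split_ifs with h
  · rw [Finset.sum_eq_single ⟨j, h⟩ (fun i _ hi => if_neg fun hij => hi (Fin.ext hij))
      (by simp)]
    simp
  · exact Finset.sum_eq_zero fun i _ => if_neg fun (hij : (i : ℕ) = j) => h (hij ▸ i.isLt)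

theorem finPrefix_transpose_mulVec_injective {m n : ℕ} (hmn : m ≤ n) :
    Function.Injective (finPrefix R m n)ᵀ.mulVec := by
  intro x y hxy
  funext i
  have := congrFun hxy ⟨i, i.isLt.trans_le hmn⟩
  simpa [finPrefix_transpose_mulVec_apply] using this

theorem eq_zero_of_mulVec_mulVec_eq_zero [NoZeroDivisors R] {ι : Type*} [Fintype ι]
    [DecidableEq ι] {L T : Matrix ι ι R} {u : ι → R}
    (hker : ∀ x, L *ᵥ x = 0 → ∃ c : R, x = c • u) (hT : Tᵀ * T = 1) {k : ι}
    (hk : (Tᵀ *ᵥ u) k ≠ 0) {y : ι → R} (hy : y k = 0) (hLTy : L *ᵥ (T *ᵥ y) = 0) :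
    y = 0 := by
  obtain ⟨c, hc⟩ := hker _ hLTy
  have hy_eq : y = c • (Tᵀ *ᵥ u) := by
    rw [← mulVec_smul, ← hc, mulVec_mulVec, hT, one_mulVec]
  have hc0 : c = 0 := by
    rw [hy_eq, Pi.smul_apply, smul_eq_mul] at hy
    exact (mul_eq_zero.mp hy).resolve_right hk
  rw [hy_eq, hc0, zero_smul]

end Matrix

/-- With `L` a connected-graph Laplacian, `H = diag(a)`, `aᵢ > 0`,
`T` orthogonal with last column `𝟙/√n`, and `J = [I_{n−1} 0]`, the matrix
`M = J Tᵀ L H L T Jᵀ` is symmetric positive definite. -/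
theorem reduced_hessian_posdef
    (n : ℕ) (hn : 2 ≤ n)
    (L H : Matrix (Fin n) (Fin n) ℝ)
    (a : Fin n → ℝ) (ha : ∀ i, 0 < a i) (hH : H = Matrix.diagonal a)
    (hLsym : L.IsSymm)
    (hker : ∀ x : Fin n → ℝ, L *ᵥ x = 0 ↔ ∃ c : ℝ, x = c • (fun _ => (1 : ℝ)))
    (T : Matrix (Fin n) (Fin n) ℝ)
    (hT : Tᵀ * T = 1)
    (hTlast : ∀ i : Fin n, T i ⟨n - 1, by omega⟩ = 1 / Real.sqrt n)
    (J : Matrix (Fin (n - 1)) (Fin n) ℝ)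
    (hJ : J = Matrix.of fun (i : Fin (n - 1)) (j : Fin n) =>
      if (i : ℕ) = (j : ℕ) then (1 : ℝ) else 0) :
    (J * Tᵀ * L * H * L * T * Jᵀ).PosDef := by
  obtain rfl : J = finPrefix ℝ (n - 1) n := hJ
  subst hH
  set B := L * T * (finPrefix ℝ (n - 1) n)ᵀ
  have hM : (finPrefix ℝ (n - 1) n) * Tᵀ * L * diagonal a * L * T * (finPrefix ℝ (n - 1) n)ᵀ
      = Bᵀ * diagonal a * B := by
    simp only [B, transpose_mul, transpose_transpose, hLsym.eq, Matrix.mul_assoc]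
  have hTone : (Tᵀ *ᵥ fun _ => 1) ⟨n - 1, by omega⟩ ≠ 0 := by
    have hn0 : (0 : ℝ) < n := by positivity
    simp [mulVec, dotProduct, hTlast, hn0.ne']
  have hB : Function.Injective B.mulVec := by
    rw [← coe_mulVecLin, injective_iff_map_eq_zero]
    intro x hx
    apply finPrefix_transpose_mulVec_injective (R := ℝ) (by omega : n - 1 ≤ n)
    rw [mulVec_zero]
    refine eq_zero_of_mulVec_mulVec_eq_zero (fun x => (hker x).mp) hT hTone ?_ ?_
    · simp [finPrefix_transpose_mulVec_apply]
    · simpa only [B, mulVecLin_apply, mulVec_mulVec, Matrix.mul_assoc] using hx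
  rw [hM]
  simpa using (posDef_diagonal_iff.2 ha).conjTranspose_mul_mul_same hB
end

section
/- Let n ≥ 2, let L be a real symmetric positive semidefinite n×n matrix with L𝟙ₙ = 0 whose kernel is exactly span(𝟙ₙ), and let H = diag(a₁,…,aₙ) with aᵢ > 0. Assume there exists ε ∈ [0,1) such that for every y ∈ ℝⁿ with 𝟙ₙᵀy = 0 one has −ε yᵀy ≤ yᵀ(Iₙ − LHL)y ≤ ε yᵀy. Then for every q ∈ ℕ, the matrix A₁ = ∑_{p=0}^{q} (Iₙ − LHL)^p is symmetric positive definite. -/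
/-!
Write `M = 1 - L H L`. Since `L 𝟙 = 0`, `𝟙` is an eigenvector of `1 + M` with eigenvalue `2`,
while on `𝟙ᗮ` the lower eigenvalue bound gives `yᵀ (1 + M) y ≥ (1 - ε) yᵀ y > 0`; as `M` is
symmetric, these two facts make `1 + M` positive definite. The partial sums
`S m = ∑_{p < m} M ^ p` satisfy `S (m + 2) = (1 + M) + M (S m) M`, and conjugation by the
symmetric `M` preserves semidefiniteness, so `S (q + 1)` is positive definite by induction in
steps of two.
-/

open Matrix Finset

theorem geom_sum_range_add_two {R : Type*} [Ring R] (x : R) (m : ℕ) :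
    ∑ p ∈ range (m + 2), x ^ p = 1 + x + x * (∑ p ∈ range m, x ^ p) * x := by
  simp only [sum_range_succ', mul_sum, sum_mul, ← pow_succ, ← pow_succ', pow_zero, pow_one,
    zero_add]
  abel

theorem dotProduct_self_pos {ι R : Type*} [Fintype ι] [Ring R] [LinearOrder R]
    [IsStrictOrderedRing R] {v : ι → R} (hv : v ≠ 0) : 0 < v ⬝ᵥ v :=
  (Fintype.sum_nonneg fun i => mul_self_nonneg (v i)).lt_of_ne'
    (dotProduct_self_eq_zero.not.mpr hv)

namespace Matrix

variable {ι : Type*} [Fintype ι]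

theorem IsHermitian.posDef_geom_sum_of_posDef_one_add {R : Type*} [DecidableEq ι] [CommRing R]
    [PartialOrder R] [StarRing R] [StarOrderedRing R] [NoZeroDivisors R] {M : Matrix ι ι R}
    (hM : M.IsHermitian) (h : (1 + M).PosDef) (q : ℕ) :
    (∑ p ∈ range (q + 1), M ^ p).PosDef := by
  induction q using Nat.twoStepInduction with
  | zero => simpa using PosDef.one
  | one => simpa [sum_range_succ] using h
  | more q ih _ =>
    rw [geom_sum_range_add_two]
    simpa only [hM.eq] using h.add_posSemidef (ih.posSemidef.mul_mul_conjTranspose_same M)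

theorem dotProduct_mulVec_add_smul_of_mulVec_eq_smul {R : Type*} [CommRing R]
    {A : Matrix ι ι R} (hA : A.IsSymm) {v : ι → R} {c : R} (hv : A *ᵥ v = c • v)
    {y : ι → R} (hy : v ⬝ᵥ y = 0) (t : R) :
    (y + t • v) ⬝ᵥ (A *ᵥ (y + t • v)) = y ⬝ᵥ (A *ᵥ y) + t ^ 2 * c * (v ⬝ᵥ v) := by
  have hvA : v ᵥ* A = c • v := by rw [← mulVec_transpose, hA.eq, hv]
  have hvAy : v ⬝ᵥ (A *ᵥ y) = 0 := by
    rw [dotProduct_mulVec, hvA, smul_dotProduct, hy, smul_zero]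
  have hyv : y ⬝ᵥ v = 0 := by rw [dotProduct_comm, hy]
  simp only [mulVec_add, mulVec_smul, hv, add_dotProduct, dotProduct_add, smul_dotProduct,
    dotProduct_smul, hvAy, hyv, smul_eq_mul]
  ring

theorem posDef_of_mulVec_eq_smul_of_pos_on_orthogonal {A : Matrix ι ι ℝ} (hA : A.IsHermitian)
    {v : ι → ℝ} {c : ℝ} (hc : 0 < c) (hv : A *ᵥ v = c • v)
    (hpos : ∀ y, v ⬝ᵥ y = 0 → y ≠ 0 → 0 < y ⬝ᵥ (A *ᵥ y)) : A.PosDef := by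
  refine PosDef.of_dotProduct_mulVec_pos hA fun x hx => ?_
  set t := (v ⬝ᵥ x) / (v ⬝ᵥ v)
  set y := x - t • v
  have hvy : v ⬝ᵥ y = 0 := by
    rcases eq_or_ne v 0 with rfl | hv0
    · exact zero_dotProduct _
    · have := (dotProduct_self_pos hv0).ne'
      simp only [y, t, dotProduct_sub, dotProduct_smul, smul_eq_mul]
      field_simp
      ring
  have hx' : x = y + t • v := (sub_add_cancel x _).symm
  change 0 < x ⬝ᵥ (A *ᵥ x)
  rw [hx', dotProduct_mulVec_add_smul_of_mulVec_eq_smul (isHermitian_iff_isSymm.mp hA) hv hvy]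
  rcases eq_or_ne y 0 with hy0 | hy0
  · obtain ⟨ht, hv0⟩ : t ≠ 0 ∧ v ≠ 0 := by simpa [hx', hy0] using hx
    have := dotProduct_self_pos hv0
    rw [hy0, mulVec_zero, dotProduct_zero, zero_add]
    positivity
  · have := hpos y hvy hy0
    have := dotProduct_self_star_nonneg v
    positivity

end Matrix

theorem truncated_sum_posdef_general
    (n : ℕ)
    (L H : Matrix (Fin n) (Fin n) ℝ)
    (a : Fin n → ℝ) (hH : H = Matrix.diagonal a)
    (hLsym : L.IsSymm)
    (hL1 : L *ᵥ (fun _ => (1 : ℝ)) = 0)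
    (ε : ℝ) (hε1 : ε < 1)
    (heig : ∀ y : Fin n → ℝ, (fun _ => (1 : ℝ)) ⬝ᵥ y = 0 →
      -(ε * (y ⬝ᵥ y)) ≤ y ⬝ᵥ ((1 - L * H * L) *ᵥ y) ∧
      y ⬝ᵥ ((1 - L * H * L) *ᵥ y) ≤ ε * (y ⬝ᵥ y))
    (q : ℕ) :
    (∑ p ∈ Finset.range (q + 1), (1 - L * H * L) ^ p).PosDef := by
  set M := 1 - L * H * L
  set ones : Fin n → ℝ := fun _ => 1
  have hLHL : (L * H * L).IsHermitian := by
    simpa only [conjTranspose_eq_transpose_of_trivial, hLsym.eq] using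
      isHermitian_mul_mul_conjTranspose L (hH ▸ isHermitian_diagonal a)
  have hM : M.IsHermitian := isHermitian_one.sub hLHL
  have hM1 : (1 + M) *ᵥ ones = (2 : ℝ) • ones := by
    simp only [M, add_mulVec, sub_mulVec, one_mulVec, ← mulVec_mulVec, hL1, mulVec_zero]
    module
  refine hM.posDef_geom_sum_of_posDef_one_add
    (posDef_of_mulVec_eq_smul_of_pos_on_orthogonal (isHermitian_one.add hM) two_pos hM1
      fun y hy hy0 => ?_) q
  rw [add_mulVec, one_mulVec, dotProduct_add]
  nlinarith [(heig y hy).1, dotProduct_self_pos hy0]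

/-- Under the convergent-eigenvalues assumption, the truncated
Neumann sum `A₁ = ∑_{p=0}^{q} (Iₙ − LHL)^p` is symmetric positive definite. -/
theorem truncated_sum_posdef
    (n : ℕ) (hn : 2 ≤ n)
    (L H : Matrix (Fin n) (Fin n) ℝ)
    (a : Fin n → ℝ) (ha : ∀ i, 0 < a i) (hH : H = Matrix.diagonal a)
    (hLsym : L.IsSymm) (hLpsd : L.PosSemidef)
    (hL1 : L *ᵥ (fun _ => (1 : ℝ)) = 0)
    (hker : ∀ x : Fin n → ℝ, L *ᵥ x = 0 ↔ ∃ c : ℝ, x = c • (fun _ => (1 : ℝ)))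
    (ε : ℝ) (hε0 : 0 ≤ ε) (hε1 : ε < 1)
    (heig : ∀ y : Fin n → ℝ, (fun _ => (1 : ℝ)) ⬝ᵥ y = 0 →
      -(ε * (y ⬝ᵥ y)) ≤ y ⬝ᵥ ((1 - L * H * L) *ᵥ y) ∧
      y ⬝ᵥ ((1 - L * H * L) *ᵥ y) ≤ ε * (y ⬝ᵥ y))
    (q : ℕ) :
    (∑ p ∈ Finset.range (q + 1), (1 - L * H * L) ^ p).PosDef :=
  truncated_sum_posdef_general n L H a hH hLsym hL1 ε hε1 heig q
end

section
/- Let L, H be arbitrary real n×n matrices and b ∈ ℝⁿ. For q ∈ ℕ define Φ_q : ℝⁿ → ℝⁿ by Φ_q(x) = x − L ∑_{p=0}^{q} (Iₙ − LHL)^p (Lb + LHx). Then Φ_q equals the (q+1)-fold composition of Φ₀ with itself: Φ_q = Φ₀^{∘(q+1)}. -/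
open Matrix Finset

variable {ι R : Type*} [Fintype ι] [DecidableEq ι] [CommRing R]

def danaUpdate (L H S : Matrix ι ι R) (b x : ι → R) : ι → R :=
  x - L *ᵥ (S *ᵥ (L *ᵥ b + (L * H) *ᵥ x))

/- One step with `S` multiplies the residual `L b + L H x` by `1 - L H L S`, so a further
step with `S = 1` amounts to a single step with `(1 - L H L) S + 1`. -/
theorem danaUpdate_one_danaUpdate (L H S : Matrix ι ι R) (b x : ι → R) :
    danaUpdate L H 1 b (danaUpdate L H S b x) = danaUpdate L H ((1 - L * H * L) * S + 1) b x := by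
  unfold danaUpdate
  rw [Matrix.sub_mul, Matrix.one_mul, add_mulVec, sub_mulVec, one_mulVec]
  simp only [Matrix.one_mul, mulVec_add, mulVec_sub, mulVec_mulVec, Matrix.mul_assoc]
  abel

theorem danaUpdate_geom_sum (L H : Matrix ι ι R) (b : ι → R) (q : ℕ) :
    danaUpdate L H (∑ p ∈ range (q + 1), (1 - L * H * L) ^ p) b = (danaUpdate L H 1 b)^[q + 1] := by
  induction q with
  | zero => simp
  | succ q ih =>
    funext x
    rw [Function.iterate_succ_apply', ← ih, danaUpdate_one_danaUpdate, geom_sum_succ]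

/-- The DANA map with inner parameter `q` equals the `(q+1)`-fold
composition of the DANA map with inner parameter `0`. -/
theorem dana_loop_conversion
    (n : ℕ)
    (L H : Matrix (Fin n) (Fin n) ℝ)
    (b : Fin n → ℝ)
    (Φ : ℕ → (Fin n → ℝ) → (Fin n → ℝ))
    (hΦ : ∀ q : ℕ, ∀ x : Fin n → ℝ, Φ q x = x - L *ᵥ
      ((∑ p ∈ Finset.range (q + 1), (1 - L * H * L) ^ p) *ᵥ (L *ᵥ b + (L * H) *ᵥ x)))
    (q : ℕ) :
    Φ q = (Φ 0)^[q + 1] := by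
  have hΦ_eq : ∀ q, Φ q = danaUpdate L H (∑ p ∈ range (q + 1), (1 - L * H * L) ^ p) b :=
    fun q => funext (hΦ q)
  have hΦ_zero : Φ 0 = danaUpdate L H 1 b := by
    rw [hΦ_eq, zero_add, sum_range_one, pow_zero]
  rw [hΦ_eq, hΦ_zero, danaUpdate_geom_sum]
end

section
/- Let L, H be arbitrary real n×n matrices and b ∈ ℝⁿ, and for q ∈ ℕ define Φ_q(x) = x − L ∑_{p=0}^{q} (Iₙ − LHL)^p (Lb + LHx). If k_a, k_b ∈ ℕ and q_a, q_b ∈ ℕ satisfy k_a(q_a + 1) = k_b(q_b + 1), then the k_a-fold composition of Φ_{q_a} equals the k_b-fold composition of Φ_{q_b}; in particular, starting DANA from the same x⁰ yields x^{k_a} = x^{k_b}. -/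
/-!
With `A = L H L` and the residual `r(x) = L b + L H x`, a DANA step with inner parameter `q`
moves `x` to `x - L S_q r(x)`, where `S_q = ∑_{p ≤ q} (1 - A)^p`, and thereby multiplies the
residual by `1 - A S_q = (1 - A)^(q+1)`. Hence `Φ_{q+1} = Φ_0 ∘ Φ_q`, so `Φ_q = Φ_0^[q+1]`
and `Φ_q^[k] = Φ_0^[k (q+1)]` depends only on `k (q + 1)`.
-/

open Matrix Finset

section

variable {m R : Type*} [Fintype m] [DecidableEq m] [Ring R]

def danaStep (L H : Matrix m m R) (b : m → R) (q : ℕ) (x : m → R) : m → R :=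
  x - L *ᵥ ((∑ p ∈ range (q + 1), (1 - L * H * L) ^ p) *ᵥ (L *ᵥ b + (L * H) *ᵥ x))

lemma danaStep_zero (L H : Matrix m m R) (b x : m → R) :
    danaStep L H b 0 x = x - L *ᵥ (L *ᵥ b + (L * H) *ᵥ x) := by
  simp [danaStep]

lemma danaStep_succ (L H : Matrix m m R) (b : m → R) (q : ℕ) :
    danaStep L H b (q + 1) = danaStep L H b 0 ∘ danaStep L H b q := by
  funext x
  have residual_step : L *ᵥ b + (L * H) *ᵥ danaStep L H b q x =
      (1 - L * H * L) ^ (q + 1) *ᵥ (L *ᵥ b + (L * H) *ᵥ x) := by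
    have geom : L * H * L * ∑ p ∈ range (q + 1), (1 - L * H * L) ^ p =
        1 - (1 - L * H * L) ^ (q + 1) := by
      rw [← mul_neg_geom_sum, sub_sub_cancel]
    rw [danaStep, mulVec_sub, mulVec_mulVec, ← add_sub_assoc, mulVec_mulVec, geom, sub_mulVec,
      one_mulVec, sub_sub_cancel]
  rw [Function.comp_apply, danaStep_zero, residual_step, danaStep, danaStep, sum_range_succ,
    add_mulVec, mulVec_add, sub_add_eq_sub_sub]

lemma danaStep_eq_iterate (L H : Matrix m m R) (b : m → R) (q : ℕ) :
    danaStep L H b q = (danaStep L H b 0)^[q + 1] := by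
  induction q with
  | zero => rfl
  | succ q ih => rw [danaStep_succ, ih, ← Function.iterate_succ']

lemma iterate_danaStep (L H : Matrix m m R) (b : m → R) (k q : ℕ) :
    (danaStep L H b q)^[k] = (danaStep L H b 0)^[k * (q + 1)] := by
  rw [danaStep_eq_iterate, ← Function.iterate_mul, Nat.mul_comm]

end

/-- If `k_a(q_a + 1) = k_b(q_b + 1)`, then running DANA for `k_a`
outer loops with inner parameter `q_a` equals running it for `k_b` outer loops
with inner parameter `q_b`; in particular the iterates from the same `x⁰` agree. -/
theorem dana_loop_equivalence
    (n : ℕ)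
    (L H : Matrix (Fin n) (Fin n) ℝ)
    (b : Fin n → ℝ)
    (Φ : ℕ → (Fin n → ℝ) → (Fin n → ℝ))
    (hΦ : ∀ q : ℕ, ∀ x : Fin n → ℝ, Φ q x = x - L *ᵥ
      ((∑ p ∈ Finset.range (q + 1), (1 - L * H * L) ^ p) *ᵥ (L *ᵥ b + (L * H) *ᵥ x)))
    (ka kb qa qb : ℕ)
    (h : ka * (qa + 1) = kb * (qb + 1)) :
    (Φ qa)^[ka] = (Φ qb)^[kb] ∧
    ∀ x0 : Fin n → ℝ, (Φ qa)^[ka] x0 = (Φ qb)^[kb] x0 := by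
  have hΦ_eq : Φ = danaStep L H b := funext fun q => funext (hΦ q)
  have loops_eq : (Φ qa)^[ka] = (Φ qb)^[kb] := by
    rw [hΦ_eq, iterate_danaStep _ _ _ ka, iterate_danaStep _ _ _ kb, h]
  exact ⟨loops_eq, fun x0 => congrFun loops_eq x0⟩
end

section
/- Let n ≥ 1, H = diag(a₁,…,aₙ) with aᵢ > 0, b ∈ ℝⁿ, d ∈ ℝ, and let L be a real symmetric n×n matrix with L𝟙ₙ = 0. If x⋆ is the minimizer of f(x) = ½ xᵀHx + bᵀx over {x : 𝟙ₙᵀx = d}, then Lb + LHx⋆ = 0; consequently x⋆ is a fixed point of the DANA map Φ_q for every q ∈ ℕ. -/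
/-!
Moving from the minimizer `x⋆` along a direction `v` with `𝟙ᵀv = 0` stays feasible, and the
objective changes by `t · vᵀ(b + Hx⋆) + t²/2 · vᵀHv`. A quadratic in `t` with no constant term
that is nonnegative for all `t` has vanishing linear coefficient, so `b + Hx⋆ ⟂ v`. Every row of
`L` sums to zero, hence is such a `v`, which gives `L(b + Hx⋆) = 0`; then every term of `Φ_q(x⋆)`
after `x⋆` vanishes.
-/

open Matrix

variable {ι : Type*} [Fintype ι]

section Semiring

variable {R : Type*} [CommSemiring R]

lemma Matrix.IsSymm.dotProduct_mulVec_comm {H : Matrix ι ι R} (hH : H.IsSymm) (u w : ι → R) :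
    u ⬝ᵥ (H *ᵥ w) = w ⬝ᵥ (H *ᵥ u) := by
  rw [dotProduct_mulVec, ← mulVec_transpose, hH.eq, dotProduct_comm]

lemma Matrix.mulVec_eq_zero_of_orthogonal {L : Matrix ι ι R} {u g : ι → R} (hL : L *ᵥ u = 0)
    (hg : ∀ v, u ⬝ᵥ v = 0 → v ⬝ᵥ g = 0) : L *ᵥ g = 0 :=
  funext fun i => hg (L i) (by rw [dotProduct_comm]; exact congrFun hL i)

end Semiring

section Quadratic

variable {𝕜 : Type*} [Field 𝕜] [LinearOrder 𝕜] [IsStrictOrderedRing 𝕜]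

lemma eq_zero_of_forall_sq_mul_add_mul_nonneg {a c : 𝕜} (h : ∀ t : 𝕜, 0 ≤ a * (t * t) + c * t) :
    c = 0 := by
  have := discrim_le_zero (a := a) (b := c) (c := 0) fun t => by simpa using h t
  rw [discrim, mul_zero, sub_zero] at this
  exact pow_eq_zero_iff two_ne_zero |>.mp (le_antisymm this (sq_nonneg c))

def quadObjective (H : Matrix ι ι 𝕜) (b x : ι → 𝕜) : 𝕜 :=
  (1 / 2) * (x ⬝ᵥ (H *ᵥ x)) + b ⬝ᵥ x

lemma quadObjective_add_smul {H : Matrix ι ι 𝕜} (hH : H.IsSymm) (b x v : ι → 𝕜) (t : 𝕜) :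
    quadObjective H b (x + t • v) =
      quadObjective H b x + ((1 / 2) * (v ⬝ᵥ (H *ᵥ v)) * (t * t) + v ⬝ᵥ (b + H *ᵥ x) * t) := by
  simp only [quadObjective, mulVec_add, mulVec_smul, add_dotProduct, dotProduct_add,
    smul_dotProduct, dotProduct_smul, smul_eq_mul, hH.dotProduct_mulVec_comm x v,
    dotProduct_comm b v]
  ring

lemma dotProduct_add_mulVec_eq_zero_of_le_add_smul {H : Matrix ι ι 𝕜} (hH : H.IsSymm)
    {b x v : ι → 𝕜} (hmin : ∀ t : 𝕜, quadObjective H b x ≤ quadObjective H b (x + t • v)) :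
    v ⬝ᵥ (b + H *ᵥ x) = 0 :=
  eq_zero_of_forall_sq_mul_add_mul_nonneg fun t => by
    simpa [quadObjective_add_smul hH] using hmin t

end Quadratic

theorem minimizer_is_fixed_point_general
    (n : ℕ)
    (a : Fin n → ℝ)
    (H : Matrix (Fin n) (Fin n) ℝ) (hH : H = Matrix.diagonal a)
    (b : Fin n → ℝ) (d : ℝ)
    (L : Matrix (Fin n) (Fin n) ℝ)
    (hL1 : L *ᵥ (fun _ => (1 : ℝ)) = 0)
    (xstar : Fin n → ℝ)
    (hfeas : (fun _ => (1 : ℝ)) ⬝ᵥ xstar = d)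
    (hmin : ∀ x : Fin n → ℝ, (fun _ => (1 : ℝ)) ⬝ᵥ x = d →
      (1 / 2) * (xstar ⬝ᵥ (H *ᵥ xstar)) + b ⬝ᵥ xstar ≤
      (1 / 2) * (x ⬝ᵥ (H *ᵥ x)) + b ⬝ᵥ x) :
    L *ᵥ b + (L * H) *ᵥ xstar = 0 ∧
    ∀ q : ℕ, xstar - L *ᵥ
      ((∑ p ∈ Finset.range (q + 1), (1 - L * H * L) ^ p) *ᵥ
        (L *ᵥ b + (L * H) *ᵥ xstar)) = xstar := by
  have hHsymm : H.IsSymm := hH ▸ isSymm_diagonal a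
  have hgrad : ∀ v, (fun _ => (1 : ℝ)) ⬝ᵥ v = 0 → v ⬝ᵥ (b + H *ᵥ xstar) = 0 :=
    fun v hv => dotProduct_add_mulVec_eq_zero_of_le_add_smul hHsymm fun t =>
      hmin _ (by rw [dotProduct_add, dotProduct_smul, hv, hfeas, smul_zero, add_zero])
  have hfixed : L *ᵥ b + (L * H) *ᵥ xstar = 0 := by
    rw [← mulVec_mulVec, ← mulVec_add]
    exact mulVec_eq_zero_of_orthogonal hL1 hgrad
  exact ⟨hfixed, fun q => by rw [hfixed, mulVec_zero, mulVec_zero, sub_zero]⟩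

/-- At the constrained minimizer `x⋆` one has `Lb + LHx⋆ = 0`, and
hence `x⋆` is a fixed point of the DANA map `Φ_q` for every `q`. -/
theorem minimizer_is_fixed_point
    (n : ℕ) (hn : 1 ≤ n)
    (a : Fin n → ℝ) (ha : ∀ i, 0 < a i)
    (H : Matrix (Fin n) (Fin n) ℝ) (hH : H = Matrix.diagonal a)
    (b : Fin n → ℝ) (d : ℝ)
    (L : Matrix (Fin n) (Fin n) ℝ)
    (hLsym : L.IsSymm)
    (hL1 : L *ᵥ (fun _ => (1 : ℝ)) = 0)
    (xstar : Fin n → ℝ)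
    (hfeas : (fun _ => (1 : ℝ)) ⬝ᵥ xstar = d)
    (hmin : ∀ x : Fin n → ℝ, (fun _ => (1 : ℝ)) ⬝ᵥ x = d →
      (1 / 2) * (xstar ⬝ᵥ (H *ᵥ xstar)) + b ⬝ᵥ xstar ≤
      (1 / 2) * (x ⬝ᵥ (H *ᵥ x)) + b ⬝ᵥ x) :
    L *ᵥ b + (L * H) *ᵥ xstar = 0 ∧
    ∀ q : ℕ, xstar - L *ᵥ
      ((∑ p ∈ Finset.range (q + 1), (1 - L * H * L) ^ p) *ᵥ
        (L *ᵥ b + (L * H) *ᵥ xstar)) = xstar :=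
  minimizer_is_fixed_point_general n a H hH b d L hL1 xstar hfeas hmin
end
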